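/- Let A be an invertible real n×n matrix and B a real n×m matrix. Suppose (W_k)_{k≥1} is a sequence of subspaces of ℝ^n and (C̃_k)_{k≥1} is a sequence of real n×n matrices such that: (i) W_1 equals the column span of A⁻¹B; (ii) for every k, the range of C̃_k is contained in W_k; and (iii) for every k, W_{k+1} is contained in the sum of W_k and the span of finitely many vectors q, each of which satisfies A⁻¹ R_k q = λ q for some λ ≠ 0, where R_k = A C̃_k + C̃_k Aᵀ + B Bᵀ. Then for every k ≥ 1, W_k ⊆ 𝒦_k(A⁻¹, A⁻¹B), i.e., W_k is contained in the span of the columns of A⁻¹B, A⁻²B, …, A^{-k}B. (This is Proposition 2.2 of the paper.) -/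

import Mathlib

open Matrix Submodule

/-!
Write `K k = 𝒦_k(A⁻¹, A⁻¹B)`, i.e. `blockKrylov A⁻¹ (A⁻¹ * B) k`. By induction, if `W k ≤ K k`
then the range of `C̃_k` lies in `K k`, and `A⁻¹ R_k = C̃_k + A⁻¹ C̃_k Aᵀ + A⁻¹ B Bᵀ`. Each of the
three terms maps into `K (k + 1)`: the first since `K` is increasing, the second since `A⁻¹` maps
`K k` into `K (k + 1)`, the third since the columns of `A⁻¹ B` span `K 1`. An eigenvector `q` of
`A⁻¹ R_k` with eigenvalue `λ ≠ 0` is `λ⁻¹ • A⁻¹ R_k q`, so it lies in `K (k + 1)` as well.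
-/

namespace Matrix

section BlockKrylov

variable {R ι κ : Type*} [CommRing R] [Fintype ι] [DecidableEq ι]

def blockKrylov (M : Matrix ι ι R) (V : Matrix ι κ R) (k : ℕ) : Submodule R (ι → R) :=
  span R (⋃ i ∈ Set.Iio k, Set.range (M ^ i * V).col)

variable (M : Matrix ι ι R) (V : Matrix ι κ R)

theorem blockKrylov_mono : Monotone (blockKrylov M V) :=
  fun _ _ hkl => span_mono <| Set.biUnion_subset_biUnion_left fun _ hi => lt_of_lt_of_le hi hkl

theorem pow_mul_mulVec_mem_blockKrylov [Fintype κ] {i k : ℕ} (hik : i < k) (v : κ → R) :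
    (M ^ i * V) *ᵥ v ∈ blockKrylov M V k := by
  have hv : (M ^ i * V) *ᵥ v ∈ LinearMap.range (M ^ i * V).mulVecLin := ⟨v, rfl⟩
  rw [range_mulVecLin] at hv
  exact span_mono (Set.subset_iUnion₂_of_subset i hik subset_rfl) hv

theorem mulVec_mem_blockKrylov [Fintype κ] {k : ℕ} (hk : 0 < k) (v : κ → R) :
    V *ᵥ v ∈ blockKrylov M V k := by
  simpa using pow_mul_mulVec_mem_blockKrylov M V hk v

theorem mulVec_mem_blockKrylov_succ [Fintype κ] {k : ℕ} {x : ι → R}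
    (hx : x ∈ blockKrylov M V k) :
    M *ᵥ x ∈ blockKrylov M V (k + 1) := by
  suffices blockKrylov M V k ≤ (blockKrylov M V (k + 1)).comap M.mulVecLin from this hx
  refine span_le.2 ?_
  classical
  intro _ hcol
  simp only [Set.mem_iUnion, Set.mem_range, Set.mem_Iio] at hcol
  obtain ⟨i, hik, j, rfl⟩ := hcol
  rw [SetLike.mem_coe, mem_comap, mulVecLin_apply, ← mulVec_single_one, mulVec_mulVec,
    ← Matrix.mul_assoc, ← pow_succ']
  exact pow_mul_mulVec_mem_blockKrylov M V (Nat.succ_lt_succ hik) _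

theorem blockKrylov_one : blockKrylov M V 1 = span R (Set.range V.col) := by
  simp [blockKrylov]

theorem blockKrylov_mul_self (k : ℕ) :
    blockKrylov M (M * V) k = span R (⋃ i ∈ Set.Iio k, Set.range (M ^ (i + 1) * V)ᵀ) := by
  simp_rw [blockKrylov, ← Matrix.mul_assoc, ← pow_succ]
  rfl

end BlockKrylov

section Lyapunov

variable {𝕜 ι κ : Type*} [Field 𝕜] [Fintype ι] [DecidableEq ι] [Fintype κ]

def lyapunovResidual (A C : Matrix ι ι 𝕜) (B : Matrix ι κ 𝕜) : Matrix ι ι 𝕜 :=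
  A * C + C * Aᵀ + B * Bᵀ

theorem inv_mul_lyapunovResidual {A : Matrix ι ι 𝕜} (hA : IsUnit A.det) (C : Matrix ι ι 𝕜)
    (B : Matrix ι κ 𝕜) :
    A⁻¹ * lyapunovResidual A C B = C + A⁻¹ * C * Aᵀ + A⁻¹ * B * Bᵀ := by
  rw [lyapunovResidual, Matrix.mul_add, Matrix.mul_add, ← Matrix.mul_assoc, nonsing_inv_mul A hA,
    Matrix.one_mul, Matrix.mul_assoc, Matrix.mul_assoc]

theorem mem_blockKrylov_succ_of_mulVec_residual_eq_smul {A C : Matrix ι ι 𝕜} {B : Matrix ι κ 𝕜}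
    (hA : IsUnit A.det) {k : ℕ} (hC : LinearMap.range C.mulVecLin ≤ blockKrylov A⁻¹ (A⁻¹ * B) k)
    {q : ι → 𝕜} {lam : 𝕜} (hlam : lam ≠ 0)
    (hq : (A⁻¹ * lyapunovResidual A C B) *ᵥ q = lam • q) :
    q ∈ blockKrylov A⁻¹ (A⁻¹ * B) (k + 1) := by
  rw [← smul_mem_iff _ hlam, ← hq, inv_mul_lyapunovResidual hA, add_mulVec, add_mulVec]
  refine add_mem (add_mem ?_ ?_) ?_
  · exact blockKrylov_mono _ _ k.le_succ (hC ⟨q, rfl⟩)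
  · rw [← mulVec_mulVec, ← mulVec_mulVec]
    exact mulVec_mem_blockKrylov_succ _ _ (hC ⟨_, rfl⟩)
  · rw [← mulVec_mulVec]
    exact mulVec_mem_blockKrylov _ _ k.succ_pos _

end Lyapunov

end Matrix

/-- Proposition 2.2 of the paper: with `M = I`, invertible `A`, initial search space equal
to the column span of `A⁻¹ * B`, and expansion at each step by finitely many eigenvectors
(with nonzero eigenvalue) of `A⁻¹ * R k`, where `R k = A * C̃ k + C̃ k * Aᵀ + B * Bᵀ` is the
residual, the RAILS search spaces satisfy `W k ⊆ 𝒦_k(A⁻¹, A⁻¹B)`, the span of the columns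
of `A⁻¹B, A⁻²B, …, A^{-k}B`. -/
theorem rails_inverse_search_space_subset_krylov
    {n m : ℕ} (A : Matrix (Fin n) (Fin n) ℝ) (hA : IsUnit A.det)
    (B : Matrix (Fin n) (Fin m) ℝ)
    (W : ℕ → Submodule ℝ (Fin n → ℝ)) (C : ℕ → Matrix (Fin n) (Fin n) ℝ)
    (hW1 : W 1 = Submodule.span ℝ (Set.range (A⁻¹ * B)ᵀ))
    (hrange : ∀ k, LinearMap.range (Matrix.mulVecLin (C k)) ≤ W k)
    (hexp : ∀ k, ∃ Q : Finset (Fin n → ℝ),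
      (∀ q ∈ Q, ∃ lam : ℝ, lam ≠ 0 ∧
        (A⁻¹ * (A * C k + C k * Aᵀ + B * Bᵀ)).mulVec q = lam • q) ∧
      W (k + 1) ≤ W k ⊔ Submodule.span ℝ (Q : Set (Fin n → ℝ))) :
    ∀ k, 1 ≤ k →
      W k ≤ Submodule.span ℝ (⋃ i ∈ Set.Iio k, Set.range (A⁻¹ ^ (i + 1) * B)ᵀ) := by
  intro k hk
  rw [← blockKrylov_mul_self]
  induction k, hk using Nat.le_induction with
  | base => rw [hW1, blockKrylov_one]; exact le_rfl
  | succ k _ ih =>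
    obtain ⟨Q, hQ, hle⟩ := hexp k
    refine hle.trans (sup_le (ih.trans (blockKrylov_mono _ _ k.le_succ)) (span_le.2 ?_))
    intro q hq
    obtain ⟨lam, hlam, hq⟩ := hQ q hq
    exact mem_blockKrylov_succ_of_mulVec_residual_eq_smul hA ((hrange k).trans ih) hlam hq
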